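/- arXiv:1406.3361 — 2 statements merged into one kernel-verified Lean document; each statement's English description precedes it below -/
import Mathlib

section
/- Let p ≥ 2 and fix k > 0. For any R₁, R₂ ∈ O(p) with det(R₁)·det(R₂) = 1, any permutation π of {1,…,p}, any S ∈ Diag⁺(p), and any (U,D), (V,Λ) ∈ SO(p)×Diag⁺(p), one has d((R₁ U R₂, S·D_π), (R₁ V R₂, S·Λ_π)) = d((U,D), (V,Λ)). -/
open Matrix

/-- `p × p` real matrices. -/
abbrev Mat (p : ℕ) := Matrix (Fin p) (Fin p) ℝ

/-- `U ∈ SO(p)`: a rotation matrix. -/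
def IsSO {p : ℕ} (U : Mat p) : Prop := U * Uᵀ = 1 ∧ U.det = 1

/-- `D ∈ Diag⁺(p)`: diagonal with positive diagonal entries. -/
def IsDiagPos {p : ℕ} (D : Mat p) : Prop := D.IsDiag ∧ ∀ i, 0 < D i i

/-- Antisymmetric matrix. -/
def IsAntisym {p : ℕ} (A : Mat p) : Prop := Aᵀ = -A

/-- The permutation matrix `P⁰_π`: in column `j`, the entry `π j` equals 1. -/
def P0 {p : ℕ} (π : Equiv.Perm (Fin p)) : Mat p :=
  Matrix.of fun i j => if i = π j then (1 : ℝ) else 0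

/-- `diag(−1,1,…,1)`. -/
def flipMat (p : ℕ) : Mat p :=
  Matrix.diagonal fun i => if (i : ℕ) = 0 then (-1 : ℝ) else 1

open scoped Classical in
/-- `P_π`: the determinant-one modification of `P⁰_π`. -/
noncomputable def Pmat {p : ℕ} (π : Equiv.Perm (Fin p)) : Mat p :=
  if (P0 π).det = 1 then P0 π else flipMat p * P0 π

/-- `D_π := P_π D P_πᵀ`. -/
noncomputable def permDiag {p : ℕ} (π : Equiv.Perm (Fin p)) (D : Mat p) : Mat p :=
  Pmat π * D * (Pmat π)ᵀ

/-- The stabilizer group `G_D = {R ∈ SO(p) : R D Rᵀ = D}`. -/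
def GD {p : ℕ} (D : Mat p) : Set (Mat p) := {R | IsSO R ∧ R * D * Rᵀ = D}

/-- Squared Frobenius norm. -/
noncomputable def frobSq {p : ℕ} (A : Mat p) : ℝ := ∑ i, ∑ j, (A i j) ^ 2

/-- `d_SO(U,V)²`: the minimal value of `‖A‖_F²/2` over antisymmetric `A` with `exp A = V Uᵀ`. -/
noncomputable def dSOsq {p : ℕ} (U V : Mat p) : ℝ :=
  sInf {x | ∃ A : Mat p, IsAntisym A ∧ NormedSpace.exp A = V * Uᵀ ∧ x = frobSq A / 2}

/-- `d_𝒟(D,Λ)²`. -/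
noncomputable def dDsq {p : ℕ} (D Λ : Mat p) : ℝ :=
  ∑ i, (Real.log (Λ i i) - Real.log (D i i)) ^ 2

/-- The geodesic distance on `SO(p) × Diag⁺(p)` (with weight `k`). -/
noncomputable def gdist {p : ℕ} (k : ℝ) (a b : Mat p × Mat p) : ℝ :=
  Real.sqrt (k * dSOsq a.1 b.1 + dDsq a.2 b.2)

/-- `𝓔_X`: the set of versions (eigen-decompositions) of `X`. -/
def Versions {p : ℕ} (X : Mat p) : Set (Mat p × Mat p) :=
  {a | IsSO a.1 ∧ IsDiagPos a.2 ∧ a.1 * a.2 * a.1ᵀ = X}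

/-- The scaling–rotation distance on `Sym⁺(p)`. -/
noncomputable def dSR {p : ℕ} (k : ℝ) (X Y : Mat p) : ℝ :=
  sInf {x | ∃ a ∈ Versions X, ∃ b ∈ Versions Y, x = gdist k a b}

/-!
`d_SO(U, V)` depends only on `V Uᵀ`. Right multiplication by `R₂` does not change `V Uᵀ`, and left
multiplication by `R₁` conjugates it by `R₁`; conjugation by an orthogonal matrix is a bijection on
antisymmetric logarithms that commutes with `exp` and preserves the Frobenius norm. On the diagonal
part, `D_π` has the diagonal of `D` permuted by `π` (the sign in `P_π` squares away), and
multiplication by `S` shifts `log dᵢ` and `log λᵢ` by the same `log sᵢ`.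
-/

section Rotation

variable {p : ℕ}

def halfFrobSqAntisymLogs (W : Mat p) : Set ℝ :=
  {x | ∃ A : Mat p, IsAntisym A ∧ NormedSpace.exp A = W ∧ x = frobSq A / 2}

lemma dSOsq_eq_sInf_halfFrobSqAntisymLogs (U V : Mat p) :
    dSOsq U V = sInf (halfFrobSqAntisymLogs (V * Uᵀ)) :=
  rfl

lemma IsAntisym.conj {A : Mat p} (hA : IsAntisym A) (Q : Mat p) : IsAntisym (Q * A * Qᵀ) := by
  unfold IsAntisym at hA ⊢
  simp only [transpose_mul, transpose_transpose, hA, Matrix.mul_neg, Matrix.neg_mul,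
    Matrix.mul_assoc]

lemma frobSq_eq_trace (A : Mat p) : frobSq A = (A * Aᵀ).trace := by
  simp [frobSq, trace, mul_apply, sq]

lemma frobSq_conj {Q : Mat p} (hQ : Qᵀ * Q = 1) (A : Mat p) : frobSq (Q * A * Qᵀ) = frobSq A := by
  have hcollapse : Q * A * Qᵀ * (Q * A * Qᵀ)ᵀ = Q * (A * Aᵀ) * Qᵀ := by
    simp only [transpose_mul, transpose_transpose, Matrix.mul_assoc, ← Matrix.mul_assoc Qᵀ Q, hQ,
      Matrix.one_mul]
  rw [frobSq_eq_trace, frobSq_eq_trace, hcollapse, trace_mul_cycle, hQ, Matrix.one_mul]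

lemma exp_conj_of_transpose_mul_self {Q : Mat p} (hQ : Qᵀ * Q = 1) (A : Mat p) :
    NormedSpace.exp (Q * A * Qᵀ) = Q * NormedSpace.exp A * Qᵀ := by
  have hinv : Q⁻¹ = Qᵀ := inv_eq_left_inv hQ
  rw [← hinv]
  exact exp_conj Q A ((isUnit_iff_isUnit_det Q).mpr (isUnit_det_of_left_inverse hQ))

lemma halfFrobSqAntisymLogs_subset_conj {Q : Mat p} (hQ : Qᵀ * Q = 1) (W : Mat p) :
    halfFrobSqAntisymLogs W ⊆ halfFrobSqAntisymLogs (Q * W * Qᵀ) := by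
  rintro x ⟨A, hA, hexp, rfl⟩
  exact ⟨Q * A * Qᵀ, hA.conj Q, by rw [exp_conj_of_transpose_mul_self hQ, hexp],
    by rw [frobSq_conj hQ]⟩

lemma halfFrobSqAntisymLogs_conj {Q : Mat p} (hQ : Q * Qᵀ = 1) (W : Mat p) :
    halfFrobSqAntisymLogs (Q * W * Qᵀ) = halfFrobSqAntisymLogs W := by
  have hQ' : Qᵀ * Q = 1 := mul_eq_one_comm.mp hQ
  refine subset_antisymm ?_ (halfFrobSqAntisymLogs_subset_conj hQ' W)
  have hQt : Qᵀᵀ * Qᵀ = 1 := by rwa [transpose_transpose]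
  have hcancel : Qᵀ * (Q * W * Qᵀ) * Qᵀᵀ = W := by
    rw [transpose_transpose, ← Matrix.mul_assoc, ← Matrix.mul_assoc, hQ', Matrix.one_mul,
      Matrix.mul_assoc, hQ', Matrix.mul_one]
  simpa only [hcancel] using halfFrobSqAntisymLogs_subset_conj hQt (Q * W * Qᵀ)

lemma dSOsq_mul_left {Q : Mat p} (hQ : Q * Qᵀ = 1) (U V : Mat p) :
    dSOsq (Q * U) (Q * V) = dSOsq U V := by
  have hconj : Q * V * (Q * U)ᵀ = Q * (V * Uᵀ) * Qᵀ := by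
    simp only [transpose_mul, Matrix.mul_assoc]
  rw [dSOsq_eq_sInf_halfFrobSqAntisymLogs, hconj, halfFrobSqAntisymLogs_conj hQ]
  rfl

lemma dSOsq_mul_right {R : Mat p} (hR : R * Rᵀ = 1) (U V : Mat p) :
    dSOsq (U * R) (V * R) = dSOsq U V := by
  have hcancel : V * R * (U * R)ᵀ = V * Uᵀ := by
    rw [transpose_mul, Matrix.mul_assoc, ← Matrix.mul_assoc R, hR, Matrix.one_mul]
  rw [dSOsq_eq_sInf_halfFrobSqAntisymLogs, hcancel]
  rfl

lemma dSOsq_mul_left_mul_right {Q R : Mat p} (hQ : Q * Qᵀ = 1) (hR : R * Rᵀ = 1) (U V : Mat p) :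
    dSOsq (Q * U * R) (Q * V * R) = dSOsq U V := by
  rw [Matrix.mul_assoc, Matrix.mul_assoc, dSOsq_mul_left hQ, dSOsq_mul_right hR]

end Rotation

section Scaling

variable {p : ℕ}

lemma P0_eq_permMatrix (π : Equiv.Perm (Fin p)) : P0 π = (π⁻¹).permMatrix ℝ := by
  ext i j
  simp [P0, PEquiv.toMatrix_apply, Equiv.eq_symm_apply, eq_comm]

lemma P0_conj (π : Equiv.Perm (Fin p)) (D : Mat p) :
    P0 π * D * (P0 π)ᵀ = D.submatrix π.symm π.symm := by
  rw [P0_eq_permMatrix, transpose_permMatrix, inv_inv, PEquiv.toMatrix_toPEquiv_mul,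
    PEquiv.mul_toMatrix_toPEquiv]
  rfl

lemma flipMat_conj_apply_self (M : Mat p) (i : Fin p) :
    (flipMat p * M * (flipMat p)ᵀ) i i = M i i := by
  simp only [flipMat, diagonal_transpose, diagonal_mul, mul_diagonal]
  split_ifs <;> ring

lemma permDiag_apply_self (π : Equiv.Perm (Fin p)) (D : Mat p) (i : Fin p) :
    permDiag π D i i = D (π.symm i) (π.symm i) := by
  unfold permDiag Pmat
  split_ifs
  · rw [P0_conj, submatrix_apply]
  · rw [transpose_mul, show flipMat p * P0 π * D * ((P0 π)ᵀ * (flipMat p)ᵀ)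
        = flipMat p * (P0 π * D * (P0 π)ᵀ) * (flipMat p)ᵀ by simp only [Matrix.mul_assoc],
      flipMat_conj_apply_self, P0_conj, submatrix_apply]

lemma dDsq_permDiag (π : Equiv.Perm (Fin p)) (D Λ : Mat p) :
    dDsq (permDiag π D) (permDiag π Λ) = dDsq D Λ := by
  simp only [dDsq, permDiag_apply_self]
  exact Equiv.sum_comp π.symm fun j => (Real.log (Λ j j) - Real.log (D j j)) ^ 2

lemma dDsq_diagonal_mul {s : Fin p → ℝ} (hs : ∀ i, s i ≠ 0) {D Λ : Mat p}
    (hD : ∀ i, D i i ≠ 0) (hΛ : ∀ i, Λ i i ≠ 0) :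
    dDsq (diagonal s * D) (diagonal s * Λ) = dDsq D Λ := by
  simp only [dDsq, diagonal_mul]
  refine Finset.sum_congr rfl fun i _ => ?_
  rw [Real.log_mul (hs i) (hΛ i), Real.log_mul (hs i) (hD i)]
  ring

end Scaling

theorem gdist_invariance_general {p : ℕ} (k : ℝ)
    (R₁ R₂ : Mat p) (hR₁ : R₁ * R₁ᵀ = 1) (hR₂ : R₂ * R₂ᵀ = 1)
    (π : Equiv.Perm (Fin p)) (S : Mat p) (hS : IsDiagPos S)
    (U D V Λ : Mat p) (hD : IsDiagPos D) (hΛ : IsDiagPos Λ) :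
    gdist k (R₁ * U * R₂, S * permDiag π D) (R₁ * V * R₂, S * permDiag π Λ)
      = gdist k (U, D) (V, Λ) := by
  have hS_eq : S = diagonal S.diag := hS.1.diagonal_diag.symm
  have hDπ : ∀ i, permDiag π D i i ≠ 0 := fun i => by
    rw [permDiag_apply_self]; exact (hD.2 _).ne'
  have hΛπ : ∀ i, permDiag π Λ i i ≠ 0 := fun i => by
    rw [permDiag_apply_self]; exact (hΛ.2 _).ne'
  simp only [gdist]
  rw [dSOsq_mul_left_mul_right hR₁ hR₂, hS_eq,
    dDsq_diagonal_mul (s := S.diag) (fun i => (hS.2 i).ne') hDπ hΛπ, dDsq_permDiag]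

/-- invariance of the geodesic distance under simultaneous left/right
multiplication by orthogonal matrices, permutation and scaling. -/
theorem gdist_invariance {p : ℕ} (hp : 2 ≤ p) (k : ℝ) (hk : 0 < k)
    (R₁ R₂ : Mat p) (hR₁ : R₁ * R₁ᵀ = 1) (hR₂ : R₂ * R₂ᵀ = 1)
    (hdet : R₁.det * R₂.det = 1)
    (π : Equiv.Perm (Fin p)) (S : Mat p) (hS : IsDiagPos S)
    (U D V Λ : Mat p) (hU : IsSO U) (hD : IsDiagPos D) (hV : IsSO V) (hΛ : IsDiagPos Λ) :
    gdist k (R₁ * U * R₂, S * permDiag π D) (R₁ * V * R₂, S * permDiag π Λ)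
      = gdist k (U, D) (V, Λ) :=
  gdist_invariance_general k R₁ R₂ hR₁ hR₂ π S hS U D V Λ hD hΛ
end

section
/- Let p ≥ 2 and fix k > 0. Let X, Y ∈ Sym⁺(p) and let ((U,D),(V,Λ)) ∈ 𝓔_X × 𝓔_Y attain d_SR(X,Y); let A be a minimal-Frobenius-norm antisymmetric matrix with exp(A) = V Uᵀ and L := log(D⁻¹Λ). Suppose there exists (V₁,Λ₁) ∈ 𝓔_Y with (V₁,Λ₁) ≠ (V,Λ) such that d((U,D),(V₁,Λ₁)) = d_SR(X,Y). Let A₁ be a minimal-Frobenius-norm antisymmetric matrix with exp(A₁) = V₁ Uᵀ and L₁ := log(D⁻¹Λ₁). Then the curve χ₁(t) := exp(A₁t) U D exp(L₁t) Uᵀ exp(A₁ᵀt) satisfies χ₁(0) = X, χ₁(1) = Y, and k·‖A₁‖_F²/2 + ‖L₁‖_F² = d_SR(X,Y)², and there exists t ∈ [0,1] such that χ₁(t) ≠ exp(At) U D exp(Lt) Uᵀ exp(Aᵀt). -/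
open Matrix

/-!
If the two curves agreed on `[0, 1]`, then `R(t) = (exp(tA) U)ᵀ exp(tA₁) U` would intertwine the
diagonal parts `D exp(tL₁)` and `D exp(tL)`. As `R(0) = 1`, the diagonal entries of `R(t)` are
nonzero for small `t`, which forces `L₁ = L` and `Λ₁ = Λ`. An off-diagonal entry of `R(t)` can
then be nonzero only where two affine functions `log dᵢ + t lᵢ` meet, so by continuity `R(t)`
commutes with `Λ`: `exp(-tA) exp(tA₁)` commutes with `UΛUᵀ`, and differentiating, so does
`exp(-tA) (A₁ - A) exp(tA)` for `0 < t < 1`. The span of these matrices contains `A₁ - A` and is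
invariant under `ad A`, which is skew for the Frobenius inner product; projecting `A₁ - A` onto the
kernel of `ad A` inside it gives an antisymmetric `C` commuting with `A` and `UΛUᵀ` with
`⟪A, C⟫ = ⟪A, A₁ - A⟫`. Since `exp(sC) V` is again a version of `Y`, reached from `U` by `A + sC`,
minimality of `A` gives `⟪A, C⟫ ≥ 0`. As both curves have the same energy, `‖A₁‖ = ‖A‖`, and then
`⟪A, A₁ - A⟫ = -‖A₁ - A‖² / 2` forces `A₁ = A`, hence `V₁ = V`.
-/

open NormedSpace Set Filter Topology

namespace Matrix

variable {n R : Type*} [Fintype n] [DecidableEq n]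

theorem semiconjBy_diagonal_iff [CommSemiring R] {Q : Matrix n n R} {u v : n → R} :
    SemiconjBy Q (diagonal u) (diagonal v) ↔ ∀ i j, Q i j * u j = v i * Q i j := by
  simp only [SemiconjBy, ← Matrix.ext_iff, mul_diagonal, diagonal_mul]

theorem commute_diagonal_iff [CommRing R] [NoZeroDivisors R] {Q : Matrix n n R} {v : n → R} :
    Commute Q (diagonal v) ↔ ∀ i j, v i ≠ v j → Q i j = 0 := by
  refine semiconjBy_diagonal_iff.trans (forall₂_congr fun i j => ?_)
  rw [mul_comm, mul_eq_mul_right_iff, or_iff_not_imp_left, eq_comm]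

end Matrix

theorem eq_zero_on_Icc_of_affine_ne_zero {g : ℝ → ℝ} (hg : Continuous g) {a b : ℝ}
    (hab : a ≠ 0 ∨ b ≠ 0) (h : ∀ t ∈ Icc (0 : ℝ) 1, a + t * b ≠ 0 → g t = 0) :
    ∀ t ∈ Icc (0 : ℝ) 1, g t = 0 := by
  have hroots : {t : ℝ | a + t * b = 0}.Subsingleton := by
    intro s hs t ht
    rw [mem_ofPred_eq] at hs ht
    have hst : (s - t) * b = 0 := by linear_combination hs - ht
    rcases mul_eq_zero.1 hst with hst | hb
    · exact sub_eq_zero.1 hst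
    · simp [hb] at hs; simp [hs, hb] at hab
  have hzero : IsClosed {t | g t = 0} := isClosed_eq hg continuous_const
  have hIoo : Ioo (0 : ℝ) 1 ⊆ {t | g t = 0} :=
    ((hroots.countable.dense_compl ℝ).open_subset_closure_inter isOpen_Ioo).trans
      (closure_minimal (fun t ht => h t (Ioo_subset_Icc_self ht.1) ht.2) hzero)
  rw [← closure_Ioo zero_ne_one]
  exact fun t ht => closure_minimal hIoo hzero ht

theorem commute_diagonal_of_commute_diagonal_exp_affine {n : Type*} [Fintype n] [DecidableEq n]
    {R : ℝ → Matrix n n ℝ} (hR : Continuous R) {α β : n → ℝ}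
    (h : ∀ t ∈ Icc (0 : ℝ) 1, Commute (R t) (diagonal fun i => Real.exp (α i + t * β i)))
    (f : ℝ → ℝ → ℝ) : ∀ t ∈ Icc (0 : ℝ) 1, Commute (R t) (diagonal fun i => f (α i) (β i)) := by
  intro t ht
  refine commute_diagonal_iff.2 fun i j hij => ?_
  have hab : α i - α j ≠ 0 ∨ β i - β j ≠ 0 := by
    by_contra! h0
    exact hij (by rw [sub_eq_zero.1 h0.1, sub_eq_zero.1 h0.2])
  refine eq_zero_on_Icc_of_affine_ne_zero (hR.matrix_elem i j) hab (fun s hs hne => ?_) t ht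
  refine commute_diagonal_iff.1 (h s hs) i j fun heq => hne ?_
  linear_combination Real.exp_injective heq

theorem eq_of_semiconjBy_diagonal_exp {n : Type*} [Fintype n] [DecidableEq n]
    {R : ℝ → Matrix n n ℝ} (hR : Continuous R) (hR0 : R 0 = 1) {α β γ : n → ℝ}
    (h : ∀ t ∈ Icc (0 : ℝ) 1, SemiconjBy (R t) (diagonal fun i => Real.exp (α i + t * γ i))
      (diagonal fun i => Real.exp (α i + t * β i))) : γ = β := by
  funext i
  have hRii : Tendsto (fun t => R t i i) (𝓝 0) (𝓝 1) := by
    simpa [hR0] using (hR.matrix_elem i i).tendsto 0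
  obtain ⟨t, ⟨ht0, ht1⟩, hRt⟩ : ∃ t ∈ Ioc (0 : ℝ) 1, R t i i ≠ 0 :=
    (Filter.Eventually.and (Ioc_mem_nhdsGT zero_lt_one)
      (eventually_nhdsWithin_of_eventually_nhds (hRii.eventually_ne one_ne_zero))).exists
  have hii := semiconjBy_diagonal_iff.1 (h t ⟨ht0.le, ht1⟩) i i
  rw [mul_comm] at hii
  have := Real.exp_injective (mul_right_cancel₀ hRt hii)
  exact mul_left_cancel₀ ht0.ne' (by linarith)

theorem Submodule.mem_of_hasDerivAt {E : Type*} [NormedAddCommGroup E] [NormedSpace ℝ E]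
    [FiniteDimensional ℝ E] (W : Submodule ℝ E) {f : ℝ → E} {f' : E} {s : Set ℝ} {t : ℝ}
    (hs : s ∈ 𝓝 t) (hf : ∀ u ∈ s, f u ∈ W) (hd : HasDerivAt f f' t) : f' ∈ W := by
  refine W.closed_of_finiteDimensional.mem_of_tendsto (hasDerivAt_iff_tendsto_slope.1 hd) ?_
  filter_upwards [nhdsWithin_le_nhds hs] with u hu
  rw [slope_def_module]
  exact W.smul_mem _ (W.sub_mem (hf u hu) (hf t (mem_of_mem_nhds hs)))

theorem Commute.of_hasDerivAt {𝔸 : Type*} [NormedRing 𝔸] [NormedAlgebra ℝ 𝔸] {G : ℝ → 𝔸}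
    {G' M : 𝔸} {s : Set ℝ} {t : ℝ} (hs : s ∈ 𝓝 t) (hG : HasDerivAt G G' t)
    (h : ∀ u ∈ s, Commute (G u) M) : Commute G' M :=
  (hG.mul_const M).unique <| (hG.const_mul M).congr_of_eventuallyEq <|
    Filter.mem_of_superset hs fun u hu => (h u hu).eq

theorem Commute.of_mul_isUnit {M : Type*} [Monoid M] {a u b : M} (h : Commute (a * u) b)
    (hu : IsUnit u) (hub : Commute u b) : Commute a b := by
  obtain ⟨u, rfl⟩ := hu
  simpa using h.mul_left hub.units_inv_left

theorem exists_mem_ker_sub_mem_map_of_skew {E : Type*} [NormedAddCommGroup E]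
    [InnerProductSpace ℝ E] [FiniteDimensional ℝ E] (S : E →ₗ[ℝ] E)
    (hS : ∀ x y, inner ℝ (S x) y = -inner ℝ x (S y)) {W : Submodule ℝ E} (hW : W.map S ≤ W)
    {b : E} (hb : b ∈ W) : ∃ z ∈ W, S z = 0 ∧ b - z ∈ W.map S := by
  obtain ⟨y, hy, z, hz, rfl⟩ := (W.map S).exists_add_mem_mem_orthogonal b
  have hzW : z ∈ W := by simpa using W.sub_mem hb (hW hy)
  refine ⟨z, hzW, ?_, by simpa using hy⟩
  have hSz : S z ∈ W.map S := Submodule.mem_map_of_mem hzW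
  have hSSz : S (S z) ∈ W.map S := Submodule.mem_map_of_mem (hW hSz)
  rw [← inner_self_eq_zero (𝕜 := ℝ), hS, real_inner_comm,
    (Submodule.mem_orthogonal _ _).1 hz _ hSSz, neg_zero]

section ScalingRotation

variable {p : ℕ}

noncomputable def frobInner (X Y : Mat p) : ℝ := ∑ i, ∑ j, X i j * Y i j

theorem frobInner_sub_right (X Y Z : Mat p) :
    frobInner X (Y - Z) = frobInner X Y - frobInner X Z := by
  simp [frobInner, mul_sub]

theorem frobInner_eq_trace (X Y : Mat p) : frobInner X Y = trace (Xᵀ * Y) := by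
  simp only [frobInner, trace, diag, mul_apply, transpose_apply]
  exact Finset.sum_comm

theorem frobSq_nonneg (X : Mat p) : 0 ≤ frobSq X :=
  Finset.sum_nonneg fun _ _ => Finset.sum_nonneg fun _ _ => sq_nonneg _

theorem frobSq_eq_zero {X : Mat p} (h : frobSq X = 0) : X = 0 := by
  ext i j
  have hi := (Finset.sum_eq_zero_iff_of_nonneg fun i _ =>
    Finset.sum_nonneg fun j _ => sq_nonneg (X i j)).1 h i (Finset.mem_univ i)
  simpa using (Finset.sum_eq_zero_iff_of_nonneg fun j _ => sq_nonneg (X i j)).1 hi j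
    (Finset.mem_univ j)

theorem frobSq_add_smul (X Y : Mat p) (s : ℝ) :
    frobSq (X + s • Y) = frobSq X + 2 * s * frobInner X Y + s ^ 2 * frobSq Y := by
  simp only [frobSq, frobInner, Matrix.add_apply, Matrix.smul_apply, smul_eq_mul, Finset.mul_sum,
    ← Finset.sum_add_distrib]
  exact Finset.sum_congr rfl fun i _ => Finset.sum_congr rfl fun j _ => by ring

theorem eq_of_frobSq_eq_of_frobInner_sub_nonneg {A A₁ : Mat p} (hnorm : frobSq A₁ = frobSq A)
    (h : 0 ≤ frobInner A (A₁ - A)) : A₁ = A := by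
  have hexpand := frobSq_add_smul A (A₁ - A) 1
  rw [one_smul, add_sub_cancel, hnorm] at hexpand
  exact sub_eq_zero.1 (frobSq_eq_zero (by nlinarith [frobSq_nonneg (A₁ - A)]))

theorem IsAntisym.add {A B : Mat p} (hA : IsAntisym A) (hB : IsAntisym B) : IsAntisym (A + B) := by
  rw [IsAntisym, transpose_add, hA, hB, neg_add]

theorem IsAntisym.sub {A B : Mat p} (hA : IsAntisym A) (hB : IsAntisym B) : IsAntisym (A - B) := by
  rw [IsAntisym, transpose_sub, hA, hB, neg_sub_neg, neg_sub]

theorem IsAntisym.neg {A : Mat p} (hA : IsAntisym A) : IsAntisym (-A) := by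
  rw [IsAntisym, transpose_neg, hA]

theorem IsAntisym.smul {A : Mat p} (hA : IsAntisym A) (s : ℝ) : IsAntisym (s • A) := by
  rw [IsAntisym, transpose_smul, hA, smul_neg]

theorem frobInner_commutator_left {A : Mat p} (hA : IsAntisym A) (X Y : Mat p) :
    frobInner (A * X - X * A) Y = -frobInner X (A * Y - Y * A) := by
  have hA' : Aᵀ = -A := hA
  simp only [frobInner_eq_trace, transpose_sub, transpose_mul, hA', neg_mul, mul_neg, sub_mul,
    mul_sub, trace_sub, trace_neg, Matrix.mul_assoc]
  rw [trace_mul_comm A, Matrix.mul_assoc]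
  ring

theorem frobInner_commutator_self {A : Mat p} (hA : IsAntisym A) (W : Mat p) :
    frobInner A (A * W - W * A) = 0 := by
  simpa [frobInner] using (frobInner_commutator_left hA A W).symm

theorem exists_mem_ker_sub_mem_map_of_frobInner_skew (S : Mat p →ₗ[ℝ] Mat p)
    (hS : ∀ X Y, frobInner (S X) Y = -frobInner X (S Y)) {W : Submodule ℝ (Mat p)}
    (hW : W.map S ≤ W) {B : Mat p} (hB : B ∈ W) : ∃ C ∈ W, S C = 0 ∧ B - C ∈ W.map S := by
  let e : Mat p ≃ₗ[ℝ] EuclideanSpace ℝ (Fin p × Fin p) :=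
    (ofLinearEquiv ℝ).symm.trans
      ((LinearEquiv.curry ℝ ℝ (Fin p) (Fin p)).symm.trans (WithLp.linearEquiv 2 ℝ _).symm)
  have he : ∀ X Y, inner ℝ (e X) (e Y) = frobInner X Y := by
    intro X Y
    simp [e, frobInner, PiLp.inner_apply, Fintype.sum_prod_type, mul_comm]
  have hS' : ∀ x y, inner ℝ (e.conj S x) y = -inner ℝ x (e.conj S y) := by
    intro x y
    obtain ⟨X, rfl⟩ := e.surjective x
    obtain ⟨Y, rfl⟩ := e.surjective y
    simp [LinearEquiv.conj_apply, he, hS]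
  have hW' : (W.map e.toLinearMap).map (e.conj S) ≤ W.map e.toLinearMap := by
    rintro _ ⟨_, ⟨X, hX, rfl⟩, rfl⟩
    exact ⟨S X, hW ⟨X, hX, rfl⟩, by simp [LinearEquiv.conj_apply]⟩
  obtain ⟨z, ⟨C, hC, rfl⟩, hSC, _, ⟨X, hX, rfl⟩, hBC⟩ :=
    exists_mem_ker_sub_mem_map_of_skew _ hS' hW' (Submodule.mem_map_of_mem hB)
  refine ⟨C, hC, by simpa [LinearEquiv.conj_apply] using hSC, X, hX, ?_⟩
  simpa [LinearEquiv.conj_apply, ← map_sub] using hBC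

theorem semiconjBy_of_conj_eq {M : Type*} [Monoid M] {w w' w₁ w₁' x₁ x : M}
    (hw : w' * w = 1) (hw₁ : w₁' * w₁ = 1) (h : w₁ * x₁ * w₁' = w * x * w') :
    SemiconjBy (w' * w₁) x₁ x := by
  have := congrArg (fun y => w' * y * w₁) h
  simp only [mul_assoc, hw₁, mul_one] at this
  rwa [← mul_assoc w' w, hw, one_mul, ← mul_assoc] at this

theorem Commute.conj_of_mul_eq_one {M : Type*} [Monoid M] {u u' x y : M} (hu : u' * u = 1)
    (h : Commute x y) : Commute (u * x * u') (u * y * u') := by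
  calc u * x * u' * (u * y * u') = u * (x * (u' * u) * y) * u' := by simp only [mul_assoc]
    _ = u * (y * (u' * u) * x) * u' := by rw [hu, mul_one, mul_one, h.eq]
    _ = u * y * u' * (u * x * u') := by simp only [mul_assoc]

theorem IsSO.mul {U V : Mat p} (hU : IsSO U) (hV : IsSO V) : IsSO (U * V) := by
  refine ⟨?_, by rw [det_mul, hU.2, hV.2, one_mul]⟩
  rw [transpose_mul, Matrix.mul_assoc, ← Matrix.mul_assoc V, hV.1, Matrix.one_mul, hU.1]

theorem exp_mul_exp_neg (A : Mat p) : exp A * exp (-A) = 1 := by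
  rw [← Matrix.exp_add_of_commute _ _ (Commute.refl A).neg_right, add_neg_cancel, exp_zero]

theorem exp_neg_mul_exp (A : Mat p) : exp (-A) * exp A = 1 := by
  rw [← Matrix.exp_add_of_commute _ _ (Commute.refl A).neg_left, neg_add_cancel, exp_zero]

theorem IsAntisym.transpose_exp {A : Mat p} (hA : IsAntisym A) : (exp A)ᵀ = exp (-A) := by
  rw [← Matrix.exp_transpose, hA]

theorem IsAntisym.isSO_exp {A : Mat p} (hA : IsAntisym A) : IsSO (exp A) := by
  have horth : exp A * (exp A)ᵀ = 1 := by rw [hA.transpose_exp, exp_mul_exp_neg]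
  refine ⟨horth, ?_⟩
  have hsq : (exp A).det ^ 2 = 1 := by
    simpa [sq] using congrArg det horth
  have hhalf : exp A = exp ((2 : ℝ)⁻¹ • A) ^ 2 := by
    rw [← Matrix.exp_nsmul, two_nsmul, ← add_smul]
    norm_num
  rw [hhalf, det_pow] at hsq ⊢
  exact (pow_eq_one_iff_of_nonneg (sq_nonneg _) two_ne_zero).1 hsq

theorem IsAntisym.transpose_mul_self_exp_smul_mul {A U : Mat p} (hA : IsAntisym A)
    (hU : Uᵀ * U = 1) (t : ℝ) : (exp (t • A) * U)ᵀ * (exp (t • A) * U) = 1 := by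
  rw [transpose_mul, (hA.smul t).transpose_exp, Matrix.mul_assoc, ← Matrix.mul_assoc (exp _),
    exp_neg_mul_exp, Matrix.one_mul, hU]

theorem IsDiagPos.eq_diagonal {D : Mat p} (hD : IsDiagPos D) : D = diagonal fun i => D i i :=
  hD.1.diagonal_diag.symm

theorem IsDiagPos.mul_exp_smul_diagonal {D : Mat p} (hD : IsDiagPos D) (β : Fin p → ℝ) (t : ℝ) :
    D * exp (t • diagonal β) = diagonal fun i => Real.exp (Real.log (D i i) + t * β i) := by
  conv_lhs => rw [hD.eq_diagonal]
  rw [← diagonal_smul, Matrix.exp_diagonal, diagonal_mul_diagonal]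
  refine congrArg diagonal (funext fun i => ?_)
  rw [Real.exp_add, Real.exp_log (hD.2 i)]
  simp [Real.exp_eq_exp_ℝ]

theorem IsDiagPos.mul_exp_diagonal_log {D Λ : Mat p} (hD : IsDiagPos D) (hΛ : IsDiagPos Λ) :
    D * exp (diagonal fun i => Real.log ((D i i)⁻¹ * Λ i i)) = Λ := by
  have h := hD.mul_exp_smul_diagonal (fun i => Real.log ((D i i)⁻¹ * Λ i i)) 1
  rw [one_smul] at h
  conv_rhs => rw [hΛ.eq_diagonal]
  rw [h]
  refine congrArg diagonal (funext fun i => ?_)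
  rw [one_mul, ← Real.log_mul (hD.2 i).ne' (mul_pos (inv_pos.2 (hD.2 i)) (hΛ.2 i)).ne',
    mul_inv_cancel_left₀ (hD.2 i).ne', Real.exp_log (hΛ.2 i)]

noncomputable def srCurve (A U D L : Mat p) (t : ℝ) : Mat p :=
  exp (t • A) * U * D * exp (t • L) * Uᵀ * exp (t • Aᵀ)

theorem srCurve_zero (A U D L : Mat p) : srCurve A U D L 0 = U * D * Uᵀ := by
  simp [srCurve]

theorem srCurve_one {A U D L V : Mat p} (hU : Uᵀ * U = 1) (hexp : exp A = V * Uᵀ) :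
    srCurve A U D L 1 = V * (D * exp L) * Vᵀ := by
  simp only [srCurve, one_smul]
  rw [Matrix.exp_transpose, hexp, transpose_mul, transpose_transpose]
  calc V * Uᵀ * U * D * exp L * Uᵀ * (U * Vᵀ) = V * (Uᵀ * U) * (D * exp L) * (Uᵀ * U) * Vᵀ := by
        simp only [Matrix.mul_assoc]
    _ = V * (D * exp L) * Vᵀ := by rw [hU, Matrix.mul_one, Matrix.mul_one]

theorem srCurve_eq_frame (A U D L : Mat p) (t : ℝ) :
    srCurve A U D L t = exp (t • A) * U * (D * exp (t • L)) * (exp (t • A) * U)ᵀ := by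
  simp only [srCurve, transpose_mul, ← Matrix.exp_transpose, transpose_smul, Matrix.mul_assoc]

theorem frobSq_diagonal (v : Fin p → ℝ) : frobSq (diagonal v) = ∑ i, v i ^ 2 := by
  simp [frobSq, diagonal_apply, ite_pow]

theorem dSOsq_le {U V A : Mat p} (hA : IsAntisym A) (hexp : exp A = V * Uᵀ) :
    dSOsq U V ≤ frobSq A / 2 :=
  csInf_le ⟨0, by rintro _ ⟨A', -, -, rfl⟩; exact div_nonneg (frobSq_nonneg A') zero_le_two⟩
    ⟨A, hA, hexp, rfl⟩

theorem dSOsq_eq {U V A : Mat p} (hA : IsAntisym A) (hexp : exp A = V * Uᵀ)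
    (hAmin : ∀ A' : Mat p, IsAntisym A' → exp A' = V * Uᵀ → frobSq A ≤ frobSq A') :
    dSOsq U V = frobSq A / 2 :=
  IsLeast.csInf_eq ⟨⟨A, hA, hexp, rfl⟩, by
    rintro _ ⟨A', hA', hexp', rfl⟩
    linarith [hAmin A' hA' hexp']⟩

theorem dDsq_eq_frobSq {D Λ : Mat p} (hD : IsDiagPos D) (hΛ : IsDiagPos Λ) :
    dDsq D Λ = frobSq (diagonal fun i => Real.log ((D i i)⁻¹ * Λ i i)) := by
  rw [frobSq_diagonal]
  refine Finset.sum_congr rfl fun i _ => ?_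
  rw [Real.log_mul (inv_pos.2 (hD.2 i)).ne' (hΛ.2 i).ne', Real.log_inv]
  ring

theorem dSR_le_gdist {k : ℝ} {X Y : Mat p} {a b : Mat p × Mat p} (ha : a ∈ Versions X)
    (hb : b ∈ Versions Y) : dSR k X Y ≤ gdist k a b :=
  csInf_le ⟨0, by rintro _ ⟨-, -, -, -, rfl⟩; exact Real.sqrt_nonneg _⟩ ⟨a, ha, b, hb, rfl⟩

theorem gdist_sq_eq {k : ℝ} (hk : 0 ≤ k) {U D V Λ A : Mat p} (hD : IsDiagPos D)
    (hΛ : IsDiagPos Λ) (hA : IsAntisym A) (hexp : exp A = V * Uᵀ)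
    (hAmin : ∀ A' : Mat p, IsAntisym A' → exp A' = V * Uᵀ → frobSq A ≤ frobSq A') :
    gdist k (U, D) (V, Λ) ^ 2 =
      k * frobSq A / 2 + frobSq (diagonal fun i => Real.log ((D i i)⁻¹ * Λ i i)) := by
  rw [gdist, dSOsq_eq hA hexp hAmin, dDsq_eq_frobSq hD hΛ, Real.sq_sqrt, mul_div_assoc]
  exact add_nonneg (mul_nonneg hk (div_nonneg (frobSq_nonneg A) zero_le_two)) (frobSq_nonneg _)

theorem mem_versions_mul_of_commute {O V Λ Y : Mat p} (hO : IsSO O) (hV : (V, Λ) ∈ Versions Y)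
    (h : Commute O Y) : (O * V, Λ) ∈ Versions Y := by
  obtain ⟨hVSO, hΛ, hY⟩ := hV
  refine ⟨hO.mul hVSO, hΛ, ?_⟩
  change O * V * Λ * (O * V)ᵀ = Y
  calc O * V * Λ * (O * V)ᵀ = O * (V * Λ * Vᵀ) * Oᵀ := by
        simp only [transpose_mul, Matrix.mul_assoc]
    _ = Y := by rw [hY, h.eq, Matrix.mul_assoc, hO.1, Matrix.mul_one]

theorem frobSq_le_of_mem_versions {k : ℝ} (hk : 0 < k) {X Y U D V Λ A : Mat p}
    (hUD : (U, D) ∈ Versions X) (hmin : gdist k (U, D) (V, Λ) = dSR k X Y)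
    (hA : IsAntisym A) (hexp : exp A = V * Uᵀ)
    (hAmin : ∀ A' : Mat p, IsAntisym A' → exp A' = V * Uᵀ → frobSq A ≤ frobSq A')
    {A' : Mat p} (hA' : IsAntisym A') (hV' : (exp A' * U, Λ) ∈ Versions Y) :
    frobSq A ≤ frobSq A' := by
  have hdSO : dSOsq U (exp A' * U) ≤ frobSq A' / 2 :=
    dSOsq_le hA' (by rw [Matrix.mul_assoc, hUD.1.1, Matrix.mul_one])
  have hle : gdist k (U, D) (V, Λ) ≤ √(k * (frobSq A' / 2) + dDsq D Λ) :=
    (hmin.trans_le (dSR_le_gdist hUD hV')).trans (Real.sqrt_le_sqrt (by dsimp only; gcongr))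
  rw [gdist, dSOsq_eq hA hexp hAmin, Real.sqrt_le_sqrt_iff] at hle
  · nlinarith
  · exact add_nonneg (mul_nonneg hk.le (div_nonneg (frobSq_nonneg A') zero_le_two))
      (Finset.sum_nonneg fun _ _ => sq_nonneg _)

theorem nonneg_of_forall_le_quadratic {a c : ℝ} (h : ∀ s : ℝ, 0 ≤ 2 * s * a + s ^ 2 * c) :
    0 ≤ a := by
  by_contra! ha
  have hs := h (-a / (|c| + 1))
  have hc : c ≤ |c| := le_abs_self c
  have hpos : 0 < |c| + 1 := by positivity
  field_simp at hs
  nlinarith [abs_nonneg c]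

theorem frobInner_nonneg_of_commute {k : ℝ} (hk : 0 < k) {X Y U D V Λ A C : Mat p}
    (hUD : (U, D) ∈ Versions X) (hVL : (V, Λ) ∈ Versions Y)
    (hmin : gdist k (U, D) (V, Λ) = dSR k X Y) (hA : IsAntisym A) (hexp : exp A = V * Uᵀ)
    (hAmin : ∀ A' : Mat p, IsAntisym A' → exp A' = V * Uᵀ → frobSq A ≤ frobSq A')
    (hC : IsAntisym C) (hAC : Commute A C) (hCM : Commute C (U * Λ * Uᵀ)) :
    0 ≤ frobInner A C := by
  have hV : V = exp A * U := by
    rw [hexp, Matrix.mul_assoc, mul_eq_one_comm.1 hUD.1.1, Matrix.mul_one]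
  have hCY : Commute C Y := by
    have hY : Y = exp A * (U * Λ * Uᵀ) * exp (-A) := by
      rw [← hVL.2.2, hV, ← hA.transpose_exp]
      simp only [transpose_mul, Matrix.mul_assoc]
    rw [hY]
    exact (hAC.symm.exp_right.mul_right hCM).mul_right hAC.symm.neg_right.exp_right
  refine nonneg_of_forall_le_quadratic (c := frobSq C) fun s => ?_
  have hle := frobSq_le_of_mem_versions hk hUD hmin hA hexp hAmin (hA.add (hC.smul s)) ?_
  · rw [frobSq_add_smul] at hle
    linarith
  · rw [Matrix.exp_add_of_commute _ _ (hAC.smul_right s), (hAC.smul_right s).exp.eq,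
      Matrix.mul_assoc, ← hV]
    exact mem_versions_mul_of_commute (hC.smul s).isSO_exp hVL (hCY.smul_left s).exp_left

section Calculus

-- Calculus needs some normed-algebra structure on matrices; which norm is irrelevant.
attribute [local instance] Matrix.linftyOpNormedRing Matrix.linftyOpNormedAlgebra

theorem continuous_exp_smul (A : Mat p) : Continuous fun t : ℝ => exp (t • A) :=
  exp_continuous.comp (continuous_id.smul continuous_const)

theorem commute_exp_conj_of_commute {A A₁ M : Mat p}
    (h : ∀ t ∈ Icc (0 : ℝ) 1, Commute (exp (t • -A) * exp (t • A₁)) M) :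
    ∀ t ∈ Ioo (0 : ℝ) 1, Commute (exp (t • -A) * (A₁ - A) * exp (t • A)) M := by
  intro t ht
  have hG : HasDerivAt (fun u : ℝ => exp (u • -A) * exp (u • A₁))
      (exp (t • -A) * (A₁ - A) * exp (t • A) * (exp (t • -A) * exp (t • A₁))) t := by
    have h₁ : HasDerivAt (fun u : ℝ => exp (u • -A)) (exp (t • -A) * -A) t :=
      hasDerivAt_exp_smul_const (-A) t
    have h₂ : HasDerivAt (fun u : ℝ => exp (u • A₁)) (A₁ * exp (t • A₁)) t :=
      hasDerivAt_exp_smul_const' A₁ t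
    refine (h₁.mul h₂).congr_deriv ?_
    have hcancel : exp (t • A) * (exp (t • -A) * exp (t • A₁)) = exp (t • A₁) := by
      rw [← Matrix.mul_assoc, smul_neg, exp_mul_exp_neg, Matrix.one_mul]
    rw [Matrix.mul_assoc _ (exp (t • A)), hcancel]
    simp only [Matrix.mul_sub, Matrix.sub_mul, Matrix.mul_neg, Matrix.neg_mul, Matrix.mul_assoc]
    abel
  exact (Commute.of_hasDerivAt (Ioo_mem_nhds ht.1 ht.2) hG fun u hu =>
    h u (Ioo_subset_Icc_self hu)).of_mul_isUnit ((Matrix.isUnit_exp _).mul (Matrix.isUnit_exp _))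
    (h t (Ioo_subset_Icc_self ht))

theorem exists_commute_frobInner_eq {A B M : Mat p} (hA : IsAntisym A) (hB : IsAntisym B)
    (h : ∀ t ∈ Ioo (0 : ℝ) 1, Commute (exp (t • -A) * B * exp (t • A)) M) :
    ∃ C, IsAntisym C ∧ Commute C M ∧ Commute A C ∧ frobInner A C = frobInner A B := by
  set f : ℝ → Mat p := fun t => exp (t • -A) * B * exp (t • A)
  have hf : ∀ t, HasDerivAt f (f t * A - A * f t) t := by
    intro t
    have h₁ : HasDerivAt (fun u : ℝ => exp (u • -A)) (-A * exp (t • -A)) t :=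
      hasDerivAt_exp_smul_const' (-A) t
    have h₂ : HasDerivAt (fun u : ℝ => exp (u • A)) (exp (t • A) * A) t :=
      hasDerivAt_exp_smul_const A t
    refine ((h₁.mul_const B).mul h₂).congr_deriv ?_
    simp only [f, Matrix.neg_mul, Matrix.mul_assoc]
    abel
  have hf_anti : ∀ t, IsAntisym (f t) := by
    intro t
    have hB' : Bᵀ = -B := hB
    show (exp (t • -A) * B * exp (t • A))ᵀ = -(exp (t • -A) * B * exp (t • A))
    rw [transpose_mul, transpose_mul, (hA.smul t).transpose_exp, (hA.neg.smul t).transpose_exp,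
      hB', smul_neg, neg_neg]
    noncomm_ring
  let S : Mat p →ₗ[ℝ] Mat p := LinearMap.mulLeft ℝ A - LinearMap.mulRight ℝ A
  have hS : ∀ X, S X = A * X - X * A := fun X => rfl
  let W := Submodule.span ℝ (f '' Ioo 0 1)
  have hfW : ∀ t ∈ Ioo (0 : ℝ) 1, f t ∈ W := fun t ht => Submodule.subset_span ⟨t, ht, rfl⟩
  have hSW : W.map S ≤ W := by
    rw [Submodule.map_span_le]
    rintro _ ⟨t, ht, rfl⟩
    simpa [hS] using W.neg_mem (W.mem_of_hasDerivAt (Ioo_mem_nhds ht.1 ht.2) hfW (hf t))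
  have hBW : B ∈ W := by
    have h0 : f 0 ∈ closure (f '' Ioo 0 1) := mem_closure_image (hf 0).continuousAt
      (by rw [closure_Ioo zero_ne_one]; exact ⟨le_rfl, zero_le_one⟩)
    have hf0 : f 0 = B := by simp [f]
    exact hf0 ▸ closure_minimal Submodule.subset_span W.closed_of_finiteDimensional h0
  have hW : ∀ X ∈ W, IsAntisym X ∧ Commute X M := by
    intro X hX
    induction hX using Submodule.span_induction with
    | mem X hX =>
      obtain ⟨t, ht, rfl⟩ := hX
      exact ⟨hf_anti t, h t ht⟩
    | zero => exact ⟨by simp [IsAntisym], Commute.zero_left M⟩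
    | add X Y _ _ hX hY => exact ⟨hX.1.add hY.1, hX.2.add_left hY.2⟩
    | smul a X _ hX => exact ⟨hX.1.smul a, hX.2.smul_left a⟩
  obtain ⟨C, hCW, hSC, w, -, hw⟩ :=
    exists_mem_ker_sub_mem_map_of_frobInner_skew S (frobInner_commutator_left hA) hSW hBW
  refine ⟨C, (hW C hCW).1, (hW C hCW).2, sub_eq_zero.1 hSC, ?_⟩
  have := frobInner_commutator_self hA w
  rw [← hS, hw, frobInner_sub_right] at this
  linarith

theorem commute_of_srCurve_eq {U D A A₁ : Mat p} {β β₁ : Fin p → ℝ} (hU : U * Uᵀ = 1)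
    (hD : IsDiagPos D) (hA : IsAntisym A) (hA₁ : IsAntisym A₁)
    (h : ∀ t ∈ Icc (0 : ℝ) 1, srCurve A₁ U D (diagonal β₁) t = srCurve A U D (diagonal β) t) :
    β₁ = β ∧ ∀ t ∈ Icc (0 : ℝ) 1,
      Commute (exp (t • -A) * exp (t • A₁)) (U * (D * exp (diagonal β)) * Uᵀ) := by
  have hUtU : Uᵀ * U = 1 := mul_eq_one_comm.1 hU
  set R : ℝ → Mat p := fun t => Uᵀ * (exp (t • -A) * exp (t • A₁)) * U
  have hR : Continuous R :=
    (continuous_const.mul ((continuous_exp_smul _).mul (continuous_exp_smul _))).mul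
      continuous_const
  have hR0 : R 0 = 1 := by simp [R, hUtU]
  have hsemi : ∀ t ∈ Icc (0 : ℝ) 1, SemiconjBy (R t)
      (diagonal fun i => Real.exp (Real.log (D i i) + t * β₁ i))
      (diagonal fun i => Real.exp (Real.log (D i i) + t * β i)) := by
    intro t ht
    have hRt : R t = (exp (t • A) * U)ᵀ * (exp (t • A₁) * U) := by
      simp only [R, transpose_mul, (hA.smul t).transpose_exp, smul_neg, Matrix.mul_assoc]
    have hcurve := h t ht
    rw [srCurve_eq_frame, srCurve_eq_frame, hD.mul_exp_smul_diagonal,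
      hD.mul_exp_smul_diagonal] at hcurve
    rw [hRt]
    exact semiconjBy_of_conj_eq (hA.transpose_mul_self_exp_smul_mul hUtU t)
      (hA₁.transpose_mul_self_exp_smul_mul hUtU t) hcurve
  obtain rfl := eq_of_semiconjBy_diagonal_exp hR hR0 hsemi
  refine ⟨rfl, fun t ht => ?_⟩
  have hcomm := (commute_diagonal_of_commute_diagonal_exp_affine hR hsemi
    (fun a b => Real.exp (a + b)) t ht).conj_of_mul_eq_one hUtU
  have hΔ := hD.mul_exp_smul_diagonal β₁ 1
  rw [one_smul] at hΔ
  simp only [one_mul] at hΔ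
  rw [hΔ]
  simpa [R, ← Matrix.mul_assoc, hU, Matrix.mul_assoc _ U Uᵀ] using hcomm

end Calculus

end ScalingRotation

theorem minimal_curve_nonunique_general {p : ℕ} (k : ℝ) (hk : 0 < k)
    (X Y : Mat p)
    (U D V Λ : Mat p) (hUD : (U, D) ∈ Versions X) (hVL : (V, Λ) ∈ Versions Y)
    (hmin : gdist k (U, D) (V, Λ) = dSR k X Y)
    (A : Mat p) (hA : IsAntisym A) (hexp : NormedSpace.exp A = V * Uᵀ)
    (hAmin : ∀ A' : Mat p, IsAntisym A' → NormedSpace.exp A' = V * Uᵀ →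
      frobSq A ≤ frobSq A')
    (L : Mat p) (hLdef : L = Matrix.diagonal fun i => Real.log ((D i i)⁻¹ * Λ i i))
    (V₁ Λ₁ : Mat p) (hV₁L₁ : (V₁, Λ₁) ∈ Versions Y) (hne : (V₁, Λ₁) ≠ (V, Λ))
    (hmin₁ : gdist k (U, D) (V₁, Λ₁) = dSR k X Y)
    (A₁ : Mat p) (hA₁ : IsAntisym A₁) (hexp₁ : NormedSpace.exp A₁ = V₁ * Uᵀ)
    (hA₁min : ∀ A' : Mat p, IsAntisym A' → NormedSpace.exp A' = V₁ * Uᵀ →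
      frobSq A₁ ≤ frobSq A')
    (L₁ : Mat p) (hL₁def : L₁ = Matrix.diagonal fun i => Real.log ((D i i)⁻¹ * Λ₁ i i)) :
    (NormedSpace.exp ((0 : ℝ) • A₁) * U * D * NormedSpace.exp ((0 : ℝ) • L₁) * Uᵀ *
        NormedSpace.exp ((0 : ℝ) • A₁ᵀ) = X) ∧
    (NormedSpace.exp ((1 : ℝ) • A₁) * U * D * NormedSpace.exp ((1 : ℝ) • L₁) * Uᵀ *
        NormedSpace.exp ((1 : ℝ) • A₁ᵀ) = Y) ∧
    (k * frobSq A₁ / 2 + frobSq L₁ = (dSR k X Y) ^ 2) ∧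
    (∃ t ∈ Set.Icc (0 : ℝ) 1,
      NormedSpace.exp (t • A₁) * U * D * NormedSpace.exp (t • L₁) * Uᵀ *
          NormedSpace.exp (t • A₁ᵀ)
        ≠ NormedSpace.exp (t • A) * U * D * NormedSpace.exp (t • L) * Uᵀ *
            NormedSpace.exp (t • Aᵀ)) := by
  have hU : U * Uᵀ = 1 := hUD.1.1
  have hUtU : Uᵀ * U = 1 := mul_eq_one_comm.1 hU
  have hD : IsDiagPos D := hUD.2.1
  have hΛ : IsDiagPos Λ := hVL.2.1
  obtain ⟨-, hΛ₁, hY₁⟩ : IsSO V₁ ∧ IsDiagPos Λ₁ ∧ V₁ * Λ₁ * V₁ᵀ = Y := hV₁L₁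
  have henergy₁ := gdist_sq_eq hk.le hD hΛ₁ hA₁ hexp₁ hA₁min
  refine ⟨(srCurve_zero A₁ U D L₁).trans hUD.2.2, ?_, by rw [← hmin₁, henergy₁, hL₁def], ?_⟩
  · rw [← hY₁, ← hD.mul_exp_diagonal_log hΛ₁, ← hL₁def]
    exact srCurve_one hUtU hexp₁
  by_contra! hcurve
  subst hLdef hL₁def
  obtain ⟨hβ, hcomm⟩ := commute_of_srCurve_eq hU hD hA hA₁ hcurve
  have hΛΛ : Λ₁ = Λ := by
    rw [← hD.mul_exp_diagonal_log hΛ₁, hβ, hD.mul_exp_diagonal_log hΛ]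
  rw [hD.mul_exp_diagonal_log hΛ] at hcomm
  obtain ⟨C, hC, hCM, hAC, hAC_inner⟩ :=
    exists_commute_frobInner_eq hA (hA₁.sub hA) (commute_exp_conj_of_commute hcomm)
  have hnorm : frobSq A₁ = frobSq A := by
    rw [hmin₁, ← hmin, gdist_sq_eq hk.le hD hΛ hA hexp hAmin, hΛΛ] at henergy₁
    nlinarith
  have hA₁A : A₁ = A := eq_of_frobSq_eq_of_frobInner_sub_nonneg hnorm
    (hAC_inner ▸ frobInner_nonneg_of_commute hk hUD hVL hmin hA hexp hAmin hC hAC hCM)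
  refine hne (Prod.ext ?_ hΛΛ)
  rw [← Matrix.mul_one V₁, ← hUtU, ← Matrix.mul_assoc, ← hexp₁, hA₁A, hexp, Matrix.mul_assoc,
    hUtU, Matrix.mul_one]

/-- non-uniqueness of minimal scaling–rotation curves when a second
minimizing version of `Y` exists. -/
theorem minimal_curve_nonunique {p : ℕ} (hp : 2 ≤ p) (k : ℝ) (hk : 0 < k)
    (X Y : Mat p) (hX : X.PosDef) (hY : Y.PosDef)
    (U D V Λ : Mat p) (hUD : (U, D) ∈ Versions X) (hVL : (V, Λ) ∈ Versions Y)
    (hmin : gdist k (U, D) (V, Λ) = dSR k X Y)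
    (A : Mat p) (hA : IsAntisym A) (hexp : NormedSpace.exp A = V * Uᵀ)
    (hAmin : ∀ A' : Mat p, IsAntisym A' → NormedSpace.exp A' = V * Uᵀ →
      frobSq A ≤ frobSq A')
    (L : Mat p) (hLdef : L = Matrix.diagonal fun i => Real.log ((D i i)⁻¹ * Λ i i))
    (V₁ Λ₁ : Mat p) (hV₁L₁ : (V₁, Λ₁) ∈ Versions Y) (hne : (V₁, Λ₁) ≠ (V, Λ))
    (hmin₁ : gdist k (U, D) (V₁, Λ₁) = dSR k X Y)
    (A₁ : Mat p) (hA₁ : IsAntisym A₁) (hexp₁ : NormedSpace.exp A₁ = V₁ * Uᵀ)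
    (hA₁min : ∀ A' : Mat p, IsAntisym A' → NormedSpace.exp A' = V₁ * Uᵀ →
      frobSq A₁ ≤ frobSq A')
    (L₁ : Mat p) (hL₁def : L₁ = Matrix.diagonal fun i => Real.log ((D i i)⁻¹ * Λ₁ i i)) :
    (NormedSpace.exp ((0 : ℝ) • A₁) * U * D * NormedSpace.exp ((0 : ℝ) • L₁) * Uᵀ *
        NormedSpace.exp ((0 : ℝ) • A₁ᵀ) = X) ∧
    (NormedSpace.exp ((1 : ℝ) • A₁) * U * D * NormedSpace.exp ((1 : ℝ) • L₁) * Uᵀ *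
        NormedSpace.exp ((1 : ℝ) • A₁ᵀ) = Y) ∧
    (k * frobSq A₁ / 2 + frobSq L₁ = (dSR k X Y) ^ 2) ∧
    (∃ t ∈ Set.Icc (0 : ℝ) 1,
      NormedSpace.exp (t • A₁) * U * D * NormedSpace.exp (t • L₁) * Uᵀ *
          NormedSpace.exp (t • A₁ᵀ)
        ≠ NormedSpace.exp (t • A) * U * D * NormedSpace.exp (t • L) * Uᵀ *
            NormedSpace.exp (t • Aᵀ)) :=
  minimal_curve_nonunique_general k hk X Y U D V Λ hUD hVL hmin A hA hexp hAmin L hLdef V₁ Λ₁ hV₁L₁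
    hne hmin₁ A₁ hA₁ hexp₁ hA₁min L₁ hL₁def
end
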